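/- Let ζ = (ζ₁,…,ζ_n) be finitely additive nonnegative measures on ℕ with ζᵢ(ℕ) < 1, and consider a strategic form game with finitely additive strategies restricted to Ξᵢ(ζᵢ) = {η : η(E) ≥ ζᵢ(E) for all E}. Let ρ be a profile with ρᵢ ∈ Ξᵢ(ζᵢ) such that for every player i: (1) every k ∈ ℕ with ρᵢ^c({k}) > ζᵢ^c({k}) is a best response (as a Dirac strategy) to ρ among all charges, and (2) the diffuse part of ρᵢ equals the diffuse part of ζᵢ. Then ρ is a Nash equilibrium of the restricted game, i.e., each ρᵢ maximizes player i's multilinear expected payoff over Ξᵢ(ζᵢ). -/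

import Mathlib

/-!
Put `t = ζᵢ(ℕ) < 1`. Every charge `η` dominating `ζᵢ` splits as the convex combination
`η = (1 - t) • π_η + t • (ζᵢ / t)` with `π_η = (η - ζᵢ) / (1 - t)` again a charge, and the second
summand does not depend on `η`. By affinity of the payoff in player `i`'s own strategy it therefore
suffices to compare `π_η` with `π_ρ`. Condition (2) makes `π_ρ` countably additive, so its payoff is
the `π_ρ`-average of the payoffs of its atoms; by condition (1) each atom is a best response, hence
earns at least the payoff of `π_η`.
-/

/-- A charge: a finitely additive probability measure on the powerset of `α`. -/
structure IsCharge {α : Type*} (κ : Set α → ℝ) : Prop where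
  nonneg : ∀ E, 0 ≤ κ E
  empty : κ ∅ = 0
  total : κ Set.univ = 1
  additive : ∀ E G, Disjoint E G → κ (E ∪ G) = κ E + κ G

/-- A finitely additive nonnegative measure on the powerset of `α`. -/
structure IsFinAdd {α : Type*} (μ : Set α → ℝ) : Prop where
  nonneg : ∀ E, 0 ≤ μ E
  empty : μ ∅ = 0
  additive : ∀ E G, Disjoint E G → μ (E ∪ G) = μ E + μ G

open Classical in
/-- The Dirac charge at a point. -/
noncomputable def diracCharge {α : Type*} (k : α) : Set α → ℝ :=
  fun E => if k ∈ E then 1 else 0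

/-- A set function on `ℕ` is countably additive if it is determined by its values on
singletons: `κ(E) = ∑_{k ∈ E} κ({k})`. -/
def CountablyAdditive (κ : Set ℕ → ℝ) : Prop :=
  ∀ E : Set ℕ, κ E = ∑' k : E, κ {(k : ℕ)}


section FinAdd

variable {α : Type*} {μ : Set α → ℝ}

lemma IsFinAdd.mono (h : IsFinAdd μ) {E G : Set α} (hEG : E ⊆ G) : μ E ≤ μ G := by
  have : μ G = μ E + μ (G \ E) := by
    rw [← h.additive E (G \ E) Set.disjoint_sdiff_right, Set.union_sdiff_cancel hEG]
  linarith [h.nonneg (G \ E)]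

lemma IsFinAdd.sum_singleton_eq (h : IsFinAdd μ) (F : Finset α) :
    ∑ k ∈ F, μ {k} = μ F := by
  classical
  induction F using Finset.induction_on with
  | empty => simpa using h.empty.symm
  | insert a F ha ih =>
    rw [Finset.sum_insert ha, ih, Finset.coe_insert, Set.insert_eq,
      h.additive _ _ (by simpa using ha)]

lemma IsFinAdd.summable_singleton (h : IsFinAdd μ) : Summable fun k : α => μ {k} :=
  summable_of_sum_le (c := μ Set.univ) (fun _ => h.nonneg _) fun F => by
    rw [h.sum_singleton_eq F]
    exact h.mono (Set.subset_univ _)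

end FinAdd

lemma IsCharge.isFinAdd {α : Type*} {κ : Set α → ℝ} (h : IsCharge κ) : IsFinAdd κ :=
  ⟨h.nonneg, h.empty, h.additive⟩

lemma isCharge_diracCharge {α : Type*} (k : α) : IsCharge (diracCharge k) := by
  classical
  refine ⟨fun E => ?_, by simp [diracCharge], by simp [diracCharge], fun E G hEG => ?_⟩
  · unfold diracCharge; split <;> norm_num
  · unfold diracCharge
    by_cases hE : k ∈ E
    · simp [hE, Set.disjoint_left.mp hEG hE]
    · by_cases hG : k ∈ G <;> simp [hE, hG]

lemma CountablyAdditive.div_const {κ : Set ℕ → ℝ} (h : CountablyAdditive κ) (c : ℝ) :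
    CountablyAdditive fun E => κ E / c := fun E => by
  simp only [h E, tsum_div_const]

lemma CountablyAdditive.tsum_singleton {κ : Set ℕ → ℝ} (h : CountablyAdditive κ) :
    ∑' k, κ {k} = κ Set.univ := by
  rw [h Set.univ, tsum_univ fun k => κ {k}]

lemma countablyAdditive_sub_of_diffuse_eq {κ μ : Set ℕ → ℝ} (hκ : IsFinAdd κ) (hμ : IsFinAdd μ)
    (h : ∀ E : Set ℕ, κ E - ∑' k : E, κ {(k : ℕ)} = μ E - ∑' k : E, μ {(k : ℕ)}) :
    CountablyAdditive fun E => κ E - μ E := fun E => by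
  have hsub : ∑' k : E, (κ {(k : ℕ)} - μ {(k : ℕ)})
      = ∑' k : E, κ {(k : ℕ)} - ∑' k : E, μ {(k : ℕ)} :=
    (hκ.summable_singleton.subtype E).tsum_sub (hμ.summable_singleton.subtype E)
  show κ E - μ E = ∑' k : E, (κ {(k : ℕ)} - μ {(k : ℕ)})
  rw [hsub]
  linarith [h E]

noncomputable def normalizedExcess {α : Type*} (κ μ : Set α → ℝ) : Set α → ℝ :=
  fun E => (κ E - μ E) / (1 - μ Set.univ)

section NormalizedExcess

variable {α : Type*} {κ μ : Set α → ℝ}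

lemma IsCharge.normalizedExcess (hκ : IsCharge κ) (hμ : IsFinAdd μ) (hμκ : ∀ E, μ E ≤ κ E)
    (hμ1 : μ Set.univ < 1) : IsCharge (normalizedExcess κ μ) := by
  have hs : (1 - μ Set.univ) ≠ 0 := by linarith
  refine ⟨fun E => div_nonneg (by linarith [hμκ E]) (by linarith), ?_, ?_, fun E G hEG => ?_⟩
  · simp [_root_.normalizedExcess, hκ.empty, hμ.empty]
  · simp [_root_.normalizedExcess, hκ.total, div_self hs]
  · simp only [_root_.normalizedExcess, hκ.additive E G hEG, hμ.additive E G hEG]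
    ring

/-- When `μ univ = 0` the junk value `μ E / 0 = 0` is harmless: then `μ = 0` and its weight
vanishes. -/
lemma IsFinAdd.convexComb_normalizedExcess (hμ : IsFinAdd μ) (hμ1 : μ Set.univ < 1) :
    (fun E => (1 - μ Set.univ) * normalizedExcess κ μ E
      + (1 - (1 - μ Set.univ)) * (μ E / μ Set.univ)) = κ := by
  funext E
  have hs : (1 - μ Set.univ) ≠ 0 := by linarith
  rcases (hμ.nonneg Set.univ).eq_or_lt with h0 | hpos
  · have hE : μ E = 0 := le_antisymm (h0 ▸ hμ.mono (Set.subset_univ E)) (hμ.nonneg E)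
    simp [_root_.normalizedExcess, ← h0, hE]
  · simp only [_root_.normalizedExcess]
    field_simp
    ring

end NormalizedExcess

lemma le_tsum_mul_of_le_on_support {w v : ℕ → ℝ} (hw : ∀ k, 0 ≤ w k) (hws : Summable w)
    {B M : ℝ} (hvM : ∀ k, v k ≤ M) (hvB : ∀ k, 0 < w k → B ≤ v k) :
    (∑' k, w k) * B ≤ ∑' k, w k * v k := by
  have hlow : ∀ k, w k * B ≤ w k * v k := fun k => by
    rcases (hw k).eq_or_lt with h | h
    · simp [← h]
    · exact mul_le_mul_of_nonneg_left (hvB k h) h.le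
  have hsum : Summable fun k => w k * v k := by
    have hgap : Summable fun k => w k * v k - w k * B :=
      (hws.mul_right (M - B)).of_nonneg_of_le (fun k => by linarith [hlow k])
        fun k => by nlinarith [hw k, hvM k]
    simpa using hgap.add (hws.mul_right B)
  rw [← tsum_mul_right]
  exact (hws.mul_right B).tsum_le_tsum hlow hsum

lemma le_of_countablyAdditive_of_atoms_isBest (U : (Set ℕ → ℝ) → ℝ)
    (hcount : ∀ κ, IsCharge κ → CountablyAdditive κ → U κ = ∑' k, κ {k} * U (diracCharge k))
    {π : Set ℕ → ℝ} (hπ : IsCharge π) (hπc : CountablyAdditive π)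
    (hbest : ∀ k, 0 < π {k} → ∀ ψ, IsCharge ψ → U ψ ≤ U (diracCharge k))
    {ψ : Set ℕ → ℝ} (hψ : IsCharge ψ) : U ψ ≤ U π := by
  have hmass : ∑' k, π {k} = 1 := hπc.tsum_singleton.trans hπ.total
  obtain ⟨k₀, hk₀⟩ : ∃ k₀, 0 < π {k₀} := by
    by_contra! hnone
    have hzero : ∀ k, π {k} = 0 := fun k => le_antisymm (hnone k) (hπ.nonneg _)
    simp [hzero] at hmass
  calc U ψ = (∑' k, π {k}) * U ψ := by rw [hmass, one_mul]
    _ ≤ ∑' k, π {k} * U (diracCharge k) :=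
        le_tsum_mul_of_le_on_support (fun _ => hπ.nonneg _) hπ.isFinAdd.summable_singleton
          (fun k => hbest k₀ hk₀ _ (isCharge_diracCharge k)) fun k hk => hbest k hk ψ hψ
    _ = U π := (hcount π hπ hπc).symm

theorem nash_of_restricted_game_general (n : ℕ)
    (ζ : Fin n → Set ℕ → ℝ) (hζ : ∀ i, IsFinAdd (ζ i)) (hζ1 : ∀ i, ζ i Set.univ < 1)
    (U : Fin n → (Fin n → Set ℕ → ℝ) → ℝ)
    (haff : ∀ (i : Fin n) (σ : Fin n → Set ℕ → ℝ) (κ κ' : Set ℕ → ℝ) (c : ℝ),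
      0 ≤ c → c ≤ 1 →
      U i (Function.update σ i (fun E => c * κ E + (1 - c) * κ' E)) =
        c * U i (Function.update σ i κ) + (1 - c) * U i (Function.update σ i κ'))
    (hcount : ∀ (i : Fin n) (σ : Fin n → Set ℕ → ℝ) (κ : Set ℕ → ℝ), IsCharge κ →
      CountablyAdditive κ →
      U i (Function.update σ i κ) = ∑' k : ℕ, κ {k} * U i (Function.update σ i (diracCharge k)))
    (ρ : Fin n → Set ℕ → ℝ) (hρ : ∀ i, IsCharge (ρ i)) (hρζ : ∀ i E, ζ i E ≤ ρ i E)
    -- [1]: every atom of the countably additive part of `ρᵢ` exceeding that of `ζᵢ`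
    -- is a pure best response to `ρ` among all charges:
    (h1 : ∀ (i : Fin n) (k : ℕ), ζ i {k} < ρ i {k} →
      ∀ ψ : Set ℕ → ℝ, IsCharge ψ →
        U i (Function.update ρ i ψ) ≤ U i (Function.update ρ i (diracCharge k)))
    -- [2]: the diffuse part of `ρᵢ` equals the diffuse part of `ζᵢ`:
    (h2 : ∀ (i : Fin n) (E : Set ℕ),
      ρ i E - ∑' k : E, ρ i {(k : ℕ)} = ζ i E - ∑' k : E, ζ i {(k : ℕ)}) :
    ∀ (i : Fin n) (η : Set ℕ → ℝ), IsCharge η → (∀ E, ζ i E ≤ η E) →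
      U i (Function.update ρ i η) ≤ U i ρ := by
  intro i η hη hηζ
  have hs : 0 ≤ 1 - ζ i Set.univ := by linarith [hζ1 i]
  have hs1 : 1 - ζ i Set.univ ≤ 1 := by linarith [(hζ i).nonneg Set.univ]
  have hρ_split := haff i ρ (normalizedExcess (ρ i) (ζ i)) (fun E => ζ i E / ζ i Set.univ) _ hs hs1
  have hη_split := haff i ρ (normalizedExcess η (ζ i)) (fun E => ζ i E / ζ i Set.univ) _ hs hs1
  rw [(hζ i).convexComb_normalizedExcess (hζ1 i), Function.update_eq_self] at hρ_split
  rw [(hζ i).convexComb_normalizedExcess (hζ1 i)] at hη_split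
  have hexcess_best : U i (Function.update ρ i (normalizedExcess η (ζ i)))
      ≤ U i (Function.update ρ i (normalizedExcess (ρ i) (ζ i))) := by
    refine le_of_countablyAdditive_of_atoms_isBest (fun κ => U i (Function.update ρ i κ))
      (hcount i ρ)
      ((hρ i).normalizedExcess (hζ i) (hρζ i) (hζ1 i))
      ((countablyAdditive_sub_of_diffuse_eq (hρ i).isFinAdd (hζ i) (h2 i)).div_const _)
      (fun k hk => h1 i k ?_) (hη.normalizedExcess (hζ i) hηζ (hζ1 i))
    exact sub_pos.mp ((div_pos_iff_of_pos_right (by linarith [hζ1 i])).mp hk)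
  rw [hρ_split, hη_split]
  gcongr

/-- Sufficient conditions for a Nash equilibrium of the restricted game `Γ(ζ)` in which each
player `i` chooses charges dominating `ζᵢ` setwise.  The payoffs `U i` are multilinear
expected payoffs of bounded uniform limits of simple functions; this is captured by:
affinity in each player's own component (`haff`), countable linearity over the pure actions
for countably additive strategies (`hcount`), and the fact that no charge can outperform
every pure action (`hsup`).  If `ρᵢ` dominates `ζᵢ`, every `k` with
`ρᵢ^c({k}) > ζᵢ^c({k})` is a best response (as a Dirac strategy) to `ρ` among all charges,
and the diffuse part of `ρᵢ` equals the diffuse part of `ζᵢ`, then `ρ` is a Nash equilibrium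
of the restricted game: each `ρᵢ` maximizes `U i` over the charges dominating `ζᵢ`. -/
theorem nash_of_restricted_game (n : ℕ) (hn : 0 < n)
    (ζ : Fin n → Set ℕ → ℝ) (hζ : ∀ i, IsFinAdd (ζ i)) (hζ1 : ∀ i, ζ i Set.univ < 1)
    (U : Fin n → (Fin n → Set ℕ → ℝ) → ℝ)
    (haff : ∀ (i : Fin n) (σ : Fin n → Set ℕ → ℝ) (κ κ' : Set ℕ → ℝ) (c : ℝ),
      0 ≤ c → c ≤ 1 →
      U i (Function.update σ i (fun E => c * κ E + (1 - c) * κ' E)) =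
        c * U i (Function.update σ i κ) + (1 - c) * U i (Function.update σ i κ'))
    (hcount : ∀ (i : Fin n) (σ : Fin n → Set ℕ → ℝ) (κ : Set ℕ → ℝ), IsCharge κ →
      CountablyAdditive κ →
      U i (Function.update σ i κ) = ∑' k : ℕ, κ {k} * U i (Function.update σ i (diracCharge k)))
    (hsup : ∀ (i : Fin n) (σ : Fin n → Set ℕ → ℝ) (ψ : Set ℕ → ℝ), IsCharge ψ → ∀ c : ℝ,
      (∀ k : ℕ, U i (Function.update σ i (diracCharge k)) ≤ c) →
      U i (Function.update σ i ψ) ≤ c)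
    (ρ : Fin n → Set ℕ → ℝ) (hρ : ∀ i, IsCharge (ρ i)) (hρζ : ∀ i E, ζ i E ≤ ρ i E)
    -- [1]: every atom of the countably additive part of `ρᵢ` exceeding that of `ζᵢ`
    -- is a pure best response to `ρ` among all charges:
    (h1 : ∀ (i : Fin n) (k : ℕ), ζ i {k} < ρ i {k} →
      ∀ ψ : Set ℕ → ℝ, IsCharge ψ →
        U i (Function.update ρ i ψ) ≤ U i (Function.update ρ i (diracCharge k)))
    -- [2]: the diffuse part of `ρᵢ` equals the diffuse part of `ζᵢ`:
    (h2 : ∀ (i : Fin n) (E : Set ℕ),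
      ρ i E - ∑' k : E, ρ i {(k : ℕ)} = ζ i E - ∑' k : E, ζ i {(k : ℕ)}) :
    ∀ (i : Fin n) (η : Set ℕ → ℝ), IsCharge η → (∀ E, ζ i E ≤ η E) →
      U i (Function.update ρ i η) ≤ U i ρ :=
  nash_of_restricted_game_general n ζ hζ hζ1 U haff hcount ρ hρ hρζ h1 h2
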